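/- arXiv:1309.4686 — 4 statements merged into one kernel-verified Lean document; each statement's English description precedes it below -/
import Mathlib

section
/- Let H(w) be the Hessian of F(w) = log(1 + Σ_{t=1}^T exp(w_t)). Then det(H(w)) = Π_{t=0}^{T} p_t(w), where p_t(w) = exp(w_t)/(1 + Σ_s exp(w_s)) for t ≥ 1 and p_0(w) = 1 - Σ_{t=1}^T p_t(w). -/
open scoped BigOperators

/-- The determinant of the Hessian of the multinomial logistic log-partition function
equals the product of all `T+1` probabilities, including the baseline probability
`p_0(w) = 1 - Σ_t p_t(w)`. -/
theorem mlogit_hessian_det (T : ℕ) (w : Fin T → ℝ)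
    (p : Fin T → ℝ)
    (hp : ∀ t, p t = Real.exp (w t) / (1 + ∑ s, Real.exp (w s)))
    (H : Matrix (Fin T) (Fin T) ℝ)
    (hH : ∀ t t', H t t' = if t = t' then p t * (1 - p t) else -(p t * p t')) :
    H.det = (1 - ∑ t, p t) * ∏ t, p t := by
  have hHeq : H = Matrix.diagonal p *
      (1 + Matrix.replicateCol Unit (fun _ => (-1 : ℝ)) * Matrix.replicateRow Unit p) := by
    ext t t'
    rw [hH]
    simp [Matrix.mul_apply, Matrix.diagonal, Matrix.one_apply, Matrix.replicateCol, Matrix.replicateRow,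
      Finset.mul_sum]
    by_cases h : t = t' <;> simp [h] <;> (try ring) <;> tauto
  rw [hHeq, Matrix.det_mul, Matrix.det_diagonal, Matrix.det_one_add_replicateCol_mul_replicateRow]
  simp [dotProduct, mul_comm]
  tauto
end

section
/- If each probability p_t(w) for t ∈ {0,1,…,T} satisfies p_t(w) ≥ c for some c ∈ (0,1], then for every v ∈ ℝ^T, v' H(w) v ≥ c^{T+1} ‖v‖_2^2, where H(w) is the Hessian of F(w) = log(1 + Σ_t exp(w_t)). -/
open scoped BigOperators Matrix

/-- If every multinomial logit probability, including the baseline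
`p_0(w) = 1 - Σ_t p_t(w)`, is at least `c ∈ (0,1]`, then the Hessian `H(w)` of the
log-partition function satisfies `v'H(w)v ≥ c^{T+1} ‖v‖₂²` for every `v`. -/
theorem mlogit_hessian_quadratic_lower (T : ℕ) (w : Fin T → ℝ) (c : ℝ)
    (hc0 : 0 < c) (hc1 : c ≤ 1)
    (p : Fin T → ℝ)
    (hp : ∀ t, p t = Real.exp (w t) / (1 + ∑ s, Real.exp (w s)))
    (H : Matrix (Fin T) (Fin T) ℝ)
    (hH : ∀ t t', H t t' = if t = t' then p t * (1 - p t) else -(p t * p t'))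
    (hbase : c ≤ 1 - ∑ t, p t) (hpt : ∀ t, c ≤ p t) :
    ∀ v : Fin T → ℝ, c ^ (T + 1) * (v ⬝ᵥ v) ≤ v ⬝ᵥ H.mulVec v := by
  intro v
  have hpn : ∀ t, 0 ≤ p t := fun t => le_trans hc0.le (hpt t)
  set S := ∑ t, p t * v t with hS
  have key : v ⬝ᵥ H.mulVec v = (∑ t, p t * v t ^ 2) - S ^ 2 := by
    unfold Matrix.mulVec dotProduct
    have hrow : ∀ t, (∑ t', H t t' * v t') = p t * v t - p t * S := by
      intro t
      have h1 : ∀ t', H t t' * v t' =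
          (if t' = t then p t * v t else 0) - p t * (p t' * v t') := by
        intro t'
        rw [hH]
        by_cases h : t = t'
        · subst h; simp; ring
        · rw [if_neg h, if_neg (Ne.symm h)]; ring
      simp_rw [h1]
      rw [Finset.sum_sub_distrib, Finset.sum_ite_eq' Finset.univ t, ← Finset.mul_sum]
      simp [hS]
    simp_rw [hrow, mul_sub]
    rw [Finset.sum_sub_distrib]
    have e1 : ∀ x : Fin T, v x * (p x * v x) = p x * v x ^ 2 := fun x => by ring
    have e2 : ∀ x : Fin T, v x * (p x * S) = (p x * v x) * S := fun x => by ring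
    simp_rw [e1, e2]
    rw [← Finset.sum_mul, ← hS]; ring
  have hS1nonneg : 0 ≤ ∑ t, p t * v t ^ 2 :=
    Finset.sum_nonneg fun t _ => mul_nonneg (hpn t) (sq_nonneg _)
  have hCS : S ^ 2 ≤ (∑ t, p t) * (∑ t, p t * v t ^ 2) := by
    have h := Finset.sum_mul_sq_le_sq_mul_sq Finset.univ
      (fun t => Real.sqrt (p t)) (fun t => Real.sqrt (p t) * v t)
    have e1 : ∀ t : Fin T, Real.sqrt (p t) * (Real.sqrt (p t) * v t) = p t * v t := by
      intro t; rw [← mul_assoc, Real.mul_self_sqrt (hpn t)]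
    have e2 : ∀ t : Fin T, Real.sqrt (p t) ^ 2 = p t := fun t => Real.sq_sqrt (hpn t)
    have e3 : ∀ t : Fin T, (Real.sqrt (p t) * v t) ^ 2 = p t * v t ^ 2 := by
      intro t; rw [mul_pow, e2]
    simp_rw [e1, e2, e3] at h
    exact h
  have hP : (∑ t, p t) ≤ 1 - c := by linarith
  have h1 : c * (∑ t, p t * v t ^ 2) ≤ v ⬝ᵥ H.mulVec v := by
    rw [key]
    have : S ^ 2 ≤ (1 - c) * (∑ t, p t * v t ^ 2) :=
      hCS.trans (mul_le_mul_of_nonneg_right hP hS1nonneg)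
    linarith
  have h2 : c * (v ⬝ᵥ v) ≤ ∑ t, p t * v t ^ 2 := by
    unfold dotProduct
    rw [Finset.mul_sum]
    refine Finset.sum_le_sum fun t _ => ?_
    have : v t * v t = v t ^ 2 := sq (v t) ▸ (sq (v t)).symm
    rw [show v t * v t = v t ^ 2 by ring]
    exact mul_le_mul_of_nonneg_right (hpt t) (sq_nonneg _)
  rcases Nat.eq_zero_or_pos T with hT | hT
  · subst hT
    have hv : v ⬝ᵥ v = 0 := by simp [dotProduct]
    rw [hv, mul_zero, key]
    simp [Finset.univ_eq_empty, hS]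
  · have hpow : c ^ (T + 1) ≤ c ^ 2 :=
      pow_le_pow_of_le_one hc0.le hc1 (by omega)
    have hvv : 0 ≤ v ⬝ᵥ v := by
      unfold dotProduct
      exact Finset.sum_nonneg fun t _ => mul_self_nonneg _
    calc c ^ (T + 1) * (v ⬝ᵥ v) ≤ c ^ 2 * (v ⬝ᵥ v) :=
          mul_le_mul_of_nonneg_right hpow hvv
      _ = c * (c * (v ⬝ᵥ v)) := by ring
      _ ≤ c * (∑ t, p t * v t ^ 2) := mul_le_mul_of_nonneg_left h2 hc0.le
      _ ≤ v ⬝ᵥ H.mulVec v := h1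
end

section
/- For w, v ∈ ℝ^T define g(α) = F(w + αv) where F(u) = log(1 + Σ_{t=1}^T exp(u_t)). Then |g'''(α)| ≤ 2 ‖v‖_1 · g''(α) ≤ 2 √T ‖v‖_2 · g''(α) for all α ∈ ℝ. -/
/-!
Along the line `a ↦ w + a • v`, the function `log (1 + ∑ₜ exp uₜ)` is the log-partition function
of the Gibbs weights `pₜ ∝ exp (wₜ + a vₜ)` on `{0, 1, …, T}`, where the constant `1` is an extra
atom with `w₀ = v₀ = 0`. Its second and third derivatives are the second and third central moments
of `v` under these weights, and every deviation `|vₜ - 𝔼 v|` is at most `2 max |vₜ| ≤ 2 ‖v‖₁`, so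
`|𝔼 (v - 𝔼 v)³| ≤ 2 ‖v‖₁ 𝔼 (v - 𝔼 v)²`. The comparison `‖v‖₁ ≤ √T ‖v‖₂` is Cauchy–Schwarz.
-/

open Finset Real

theorem abs_sum_mul_pow_three_le {ι : Type*} (s : Finset ι) {p y : ι → ℝ} {C : ℝ}
    (hp : ∀ i ∈ s, 0 ≤ p i) (hy : ∀ i ∈ s, |y i| ≤ C) :
    |∑ i ∈ s, p i * y i ^ 3| ≤ C * ∑ i ∈ s, p i * y i ^ 2 := by
  rw [mul_sum]
  refine (abs_sum_le_sum_abs _ _).trans (sum_le_sum fun i hi => ?_)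
  calc |p i * y i ^ 3| = |y i| * (p i * y i ^ 2) := by
        rw [abs_mul, abs_of_nonneg (hp i hi), abs_pow, pow_succ, sq_abs]; ring
    _ ≤ C * (p i * y i ^ 2) :=
        mul_le_mul_of_nonneg_right (hy i hi) (mul_nonneg (hp i hi) (sq_nonneg _))

section LogPartition

variable {ι : Type*} [Fintype ι] (b x : ι → ℝ)

noncomputable def tiltedMoment (k : ℕ) (a : ℝ) : ℝ :=
  ∑ i, x i ^ k * exp (b i + a * x i)

noncomputable def logPartition (a : ℝ) : ℝ :=
  log (tiltedMoment b x 0 a)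

noncomputable def gibbsMoment (k : ℕ) (a : ℝ) : ℝ :=
  tiltedMoment b x k a / tiltedMoment b x 0 a

noncomputable def gibbsCentralMoment (k : ℕ) (a : ℝ) : ℝ :=
  ∑ i, exp (b i + a * x i) / tiltedMoment b x 0 a * (x i - gibbsMoment b x 1 a) ^ k

theorem hasDerivAt_tiltedMoment (k : ℕ) (a : ℝ) :
    HasDerivAt (tiltedMoment b x k) (tiltedMoment b x (k + 1) a) a := by
  refine HasDerivAt.fun_sum fun i _ => ?_
  have hlin : HasDerivAt (fun a => b i + a * x i) (x i) a := by
    simpa using ((hasDerivAt_id a).mul_const (x i)).const_add (b i)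
  exact (hlin.exp.const_mul (x i ^ k)).congr_deriv (by ring)

theorem abs_tiltedMoment_one_le {R : ℝ} (hR : ∀ i, |x i| ≤ R) (a : ℝ) :
    |tiltedMoment b x 1 a| ≤ R * tiltedMoment b x 0 a := by
  simp only [tiltedMoment, pow_one, pow_zero, one_mul, mul_sum]
  refine (abs_sum_le_sum_abs _ _).trans (sum_le_sum fun i _ => ?_)
  rw [abs_mul, abs_of_pos (exp_pos _)]
  exact mul_le_mul_of_nonneg_right (hR i) (exp_pos _).le

theorem sum_exp_mul_sub_sq (a c : ℝ) :
    ∑ i, exp (b i + a * x i) * (x i - c) ^ 2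
      = tiltedMoment b x 2 a - 2 * c * tiltedMoment b x 1 a + c ^ 2 * tiltedMoment b x 0 a := by
  simp only [tiltedMoment, mul_sum, ← sum_sub_distrib, ← sum_add_distrib]
  exact sum_congr rfl fun i _ => by ring

theorem sum_exp_mul_sub_pow_three (a c : ℝ) :
    ∑ i, exp (b i + a * x i) * (x i - c) ^ 3
      = tiltedMoment b x 3 a - 3 * c * tiltedMoment b x 2 a + 3 * c ^ 2 * tiltedMoment b x 1 a
        - c ^ 3 * tiltedMoment b x 0 a := by
  simp only [tiltedMoment, mul_sum, ← sum_sub_distrib, ← sum_add_distrib]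
  exact sum_congr rfl fun i _ => by ring

theorem gibbsCentralMoment_eq_sum_div (k : ℕ) (a : ℝ) :
    gibbsCentralMoment b x k a
      = (∑ i, exp (b i + a * x i) * (x i - gibbsMoment b x 1 a) ^ k) / tiltedMoment b x 0 a := by
  simp only [gibbsCentralMoment, sum_div, div_mul_eq_mul_div]

variable [Nonempty ι]

theorem tiltedMoment_zero_pos (a : ℝ) : 0 < tiltedMoment b x 0 a := by
  simpa [tiltedMoment] using sum_pos (fun i _ => exp_pos (b i + a * x i)) univ_nonempty

theorem abs_gibbsMoment_one_le {R : ℝ} (hR : ∀ i, |x i| ≤ R) (a : ℝ) :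
    |gibbsMoment b x 1 a| ≤ R := by
  have hZ := tiltedMoment_zero_pos b x a
  rw [gibbsMoment, abs_div, abs_of_pos hZ, div_le_iff₀ hZ]
  exact abs_tiltedMoment_one_le b x hR a

theorem hasDerivAt_gibbsMoment (k : ℕ) (a : ℝ) :
    HasDerivAt (gibbsMoment b x k)
      (gibbsMoment b x (k + 1) a - gibbsMoment b x k a * gibbsMoment b x 1 a) a := by
  have hZ := (tiltedMoment_zero_pos b x a).ne'
  refine ((hasDerivAt_tiltedMoment b x k a).div (hasDerivAt_tiltedMoment b x 0 a) hZ).congr_deriv ?_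
  simp only [gibbsMoment]
  field_simp

theorem gibbsCentralMoment_two (a : ℝ) :
    gibbsCentralMoment b x 2 a = gibbsMoment b x 2 a - gibbsMoment b x 1 a ^ 2 := by
  have hZ := (tiltedMoment_zero_pos b x a).ne'
  rw [gibbsCentralMoment_eq_sum_div, sum_exp_mul_sub_sq]
  simp only [gibbsMoment]
  field_simp
  ring

theorem gibbsCentralMoment_three (a : ℝ) :
    gibbsCentralMoment b x 3 a = gibbsMoment b x 3 a - 3 * gibbsMoment b x 1 a * gibbsMoment b x 2 a
        + 2 * gibbsMoment b x 1 a ^ 3 := by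
  have hZ := (tiltedMoment_zero_pos b x a).ne'
  rw [gibbsCentralMoment_eq_sum_div, sum_exp_mul_sub_pow_three]
  simp only [gibbsMoment]
  field_simp
  ring

theorem gibbsCentralMoment_two_nonneg (a : ℝ) : 0 ≤ gibbsCentralMoment b x 2 a :=
  sum_nonneg fun _ _ =>
    mul_nonneg (div_nonneg (exp_pos _).le (tiltedMoment_zero_pos b x a).le) (sq_nonneg _)

theorem abs_gibbsCentralMoment_three_le {R : ℝ} (hR : ∀ i, |x i| ≤ R) (a : ℝ) :
    |gibbsCentralMoment b x 3 a| ≤ 2 * R * gibbsCentralMoment b x 2 a := by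
  refine abs_sum_mul_pow_three_le _
    (fun _ _ => div_nonneg (exp_pos _).le (tiltedMoment_zero_pos b x a).le) fun i _ => ?_
  calc |x i - gibbsMoment b x 1 a| ≤ |x i| + |gibbsMoment b x 1 a| := abs_sub _ _
    _ ≤ 2 * R := by linarith [hR i, abs_gibbsMoment_one_le b x hR a]

theorem deriv_logPartition : deriv (logPartition b x) = gibbsMoment b x 1 :=
  funext fun a =>
    ((hasDerivAt_tiltedMoment b x 0 a).log (tiltedMoment_zero_pos b x a).ne').deriv

theorem iteratedDeriv_two_logPartition (a : ℝ) :
    iteratedDeriv 2 (logPartition b x) a = gibbsCentralMoment b x 2 a := by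
  rw [gibbsCentralMoment_two, iteratedDeriv_succ, iteratedDeriv_one, deriv_logPartition,
    (hasDerivAt_gibbsMoment b x 1 a).deriv, sq]

theorem iteratedDeriv_three_logPartition (a : ℝ) :
    iteratedDeriv 3 (logPartition b x) a = gibbsCentralMoment b x 3 a := by
  have h2 : iteratedDeriv 2 (logPartition b x)
      = fun a => gibbsMoment b x 2 a - gibbsMoment b x 1 a ^ 2 :=
    funext fun a => (iteratedDeriv_two_logPartition b x a).trans (gibbsCentralMoment_two b x a)
  rw [gibbsCentralMoment_three, iteratedDeriv_succ, h2, ((hasDerivAt_gibbsMoment b x 2 a).fun_sub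
    ((hasDerivAt_gibbsMoment b x 1 a).fun_pow 2)).deriv]
  push_cast
  ring

theorem abs_iteratedDeriv_three_logPartition_le {R : ℝ} (hR : ∀ i, |x i| ≤ R) (a : ℝ) :
    |iteratedDeriv 3 (logPartition b x) a| ≤ 2 * R * iteratedDeriv 2 (logPartition b x) a := by
  rw [iteratedDeriv_three_logPartition, iteratedDeriv_two_logPartition]
  exact abs_gibbsCentralMoment_three_le b x hR a

end LogPartition

theorem sum_abs_le_sqrt_card_mul_sqrt_sum_sq {ι : Type*} [Fintype ι] (v : ι → ℝ) :
    ∑ i, |v i| ≤ √(Fintype.card ι) * √(∑ i, v i ^ 2) := by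
  simpa using sum_mul_le_sqrt_mul_sqrt univ (fun _ => (1 : ℝ)) (fun i => |v i|)

/-- Self-concordance-type bound for the multinomial logistic log-partition function.
For `g(α) = F(w + αv)` with `F(u) = log(1 + Σ_t exp(u_t))`:
`|g'''(α)| ≤ 2‖v‖₁ g''(α) ≤ 2√T ‖v‖₂ g''(α)`. -/
theorem self_concordant_bound (T : ℕ) (w v : Fin T → ℝ) (α : ℝ) :
    |iteratedDeriv 3 (fun a : ℝ => Real.log (1 + ∑ t, Real.exp (w t + a * v t))) α|
        ≤ 2 * (∑ t, |v t|)
            * iteratedDeriv 2 (fun a : ℝ => Real.log (1 + ∑ t, Real.exp (w t + a * v t))) α ∧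
      2 * (∑ t, |v t|)
          * iteratedDeriv 2 (fun a : ℝ => Real.log (1 + ∑ t, Real.exp (w t + a * v t))) α
        ≤ 2 * Real.sqrt T * Real.sqrt (∑ t, (v t) ^ 2)
            * iteratedDeriv 2 (fun a : ℝ => Real.log (1 + ∑ t, Real.exp (w t + a * v t))) α := by
  set b : Option (Fin T) → ℝ := fun o => o.elim 0 w
  set x : Option (Fin T) → ℝ := fun o => o.elim 0 v
  have hg : (fun a : ℝ => log (1 + ∑ t, exp (w t + a * v t))) = logPartition b x := by
    funext a
    simp [logPartition, tiltedMoment, b, x, Fintype.sum_option]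
  have hx : ∀ o, |x o| ≤ ∑ t, |v t| := by
    rintro (_ | t)
    · simpa [x] using sum_nonneg fun t _ => abs_nonneg (v t)
    · exact single_le_sum (fun t _ => abs_nonneg (v t)) (mem_univ t)
  rw [hg]
  refine ⟨abs_iteratedDeriv_three_logPartition_le b x hx α, ?_⟩
  have hvar : 0 ≤ iteratedDeriv 2 (logPartition b x) α := by
    rw [iteratedDeriv_two_logPartition]
    exact gibbsCentralMoment_two_nonneg b x α
  rw [mul_assoc 2 (√T)]
  gcongr
  simpa using sum_abs_le_sqrt_card_mul_sqrt_sum_sq v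
end

section
/- Let φ̄(m) for m ∈ ℕ denote a maximal m-sparse eigenvalue of a positive semidefinite matrix Q, i.e., φ̄(m)^2 = max over δ with |supp(δ)| ≤ m of (δ'Qδ)/‖δ‖_2^2. Then φ̄ is sublinear in the sense that for any positive integers k, m, φ̄(km)^2 ≤ ⌈k⌉ φ̄(m)^2 ≤ 2k φ̄(m)^2 (for k ≥ 1). -/
/-!
Split the support of a `km`-sparse vector `δ` into `k` groups of at most `m` coordinates, so that
`δ = ∑ vᵢ` with `m`-sparse blocks `vᵢ` whose squared norms add up to `‖δ‖²`. For positive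
semidefinite `Q` one has `2 vᵢ'Qvⱼ ≤ vᵢ'Qvᵢ + vⱼ'Qvⱼ`, hence
`δ'Qδ ≤ k ∑ vᵢ'Qvᵢ ≤ k φ̄(m)² ∑ ‖vᵢ‖² = k φ̄(m)² ‖δ‖²`.
-/

open scoped BigOperators Matrix

/-- The squared maximal `m`-sparse eigenvalue of a matrix `Q`:
`φ̄(m)² = sup { δ'Qδ : |supp(δ)| ≤ m, ‖δ‖₂² = 1 }`. -/
noncomputable def sparseEigSq {p : ℕ} (Q : Matrix (Fin p) (Fin p) ℝ) (m : ℕ) : ℝ :=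
  sSup {r : ℝ | ∃ δ : Fin p → ℝ,
    (Function.support δ).ncard ≤ m ∧ δ ⬝ᵥ δ = 1 ∧ r = δ ⬝ᵥ Q.mulVec δ}

open Finset Function Matrix

namespace Matrix.PosSemidef

variable {n : Type*} [Fintype n] {Q : Matrix n n ℝ}

lemma two_mul_dotProduct_mulVec_le (hQ : Q.PosSemidef) (x y : n → ℝ) :
    2 * (x ⬝ᵥ Q *ᵥ y) ≤ x ⬝ᵥ Q *ᵥ x + y ⬝ᵥ Q *ᵥ y := by
  have hsymm : y ⬝ᵥ Q *ᵥ x = x ⬝ᵥ Q *ᵥ y := by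
    rw [dotProduct_mulVec, ← mulVec_transpose, ← conjTranspose_eq_transpose_of_trivial, hQ.1,
      dotProduct_comm]
  have := hQ.dotProduct_mulVec_nonneg (x - y)
  simp only [star_trivial, mulVec_sub, dotProduct_sub, sub_dotProduct] at this
  linarith

lemma sum_dotProduct_mulVec_sum_le (hQ : Q.PosSemidef) {ι : Type*} (s : Finset ι)
    (v : ι → n → ℝ) :
    (∑ i ∈ s, v i) ⬝ᵥ Q *ᵥ ∑ i ∈ s, v i ≤ #s * ∑ i ∈ s, v i ⬝ᵥ Q *ᵥ v i := by
  have h := calc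
    2 * ((∑ i ∈ s, v i) ⬝ᵥ Q *ᵥ ∑ i ∈ s, v i)
        = ∑ i ∈ s, ∑ j ∈ s, 2 * (v i ⬝ᵥ Q *ᵥ v j) := by
      simp only [mulVec_sum, sum_dotProduct, dotProduct_sum, mul_sum]
      exact sum_comm
    _ ≤ ∑ i ∈ s, ∑ j ∈ s, (v i ⬝ᵥ Q *ᵥ v i + v j ⬝ᵥ Q *ᵥ v j) := by
      gcongr with i _ j _
      exact hQ.two_mul_dotProduct_mulVec_le _ _
    _ = 2 * (#s * ∑ i ∈ s, v i ⬝ᵥ Q *ᵥ v i) := by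
      simp only [sum_add_distrib, sum_const, nsmul_eq_mul, ← mul_sum]
      ring
  linarith

end Matrix.PosSemidef

theorem Finset.exists_card_fiber_le {α : Type*} [DecidableEq α] (s : Finset α) {k m : ℕ}
    (hs : #s ≤ k * m) : ∃ f : α → ℕ, (∀ x ∈ s, f x < k) ∧ ∀ i, #{x ∈ s | f x = i} ≤ m := by
  induction k generalizing s with
  | zero => simp_all
  | succ k ih =>
    obtain ⟨t, hts, ht⟩ := exists_subset_card_eq (min_le_right m #s)
    rw [add_one_mul] at hs
    obtain ⟨f, hf_lt, hf_card⟩ := ih (s \ t) (by rw [card_sdiff_of_subset hts]; omega)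
    refine ⟨fun x => if x ∈ t then k else f x, fun x hx => ?_, fun i => ?_⟩
    · dsimp only
      split_ifs with h
      · exact k.lt_succ_self
      · exact (hf_lt x (mem_sdiff.2 ⟨hx, h⟩)).trans k.lt_succ_self
    · by_cases hi : i = k
      · subst hi
        refine (card_le_card fun x hx => ?_).trans (ht.trans_le (min_le_left _ _))
        simp only [mem_filter] at hx
        by_contra h
        simp only [h, if_false] at hx
        exact (hf_lt x (mem_sdiff.2 ⟨hx.1, h⟩)).ne hx.2
      · refine (card_le_card fun x hx => ?_).trans (hf_card i)
        simp only [mem_filter, mem_sdiff] at hx ⊢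
        split_ifs at hx with h
        · exact absurd hx.2.symm hi
        · exact ⟨⟨hx.1, h⟩, hx.2⟩

theorem exists_sum_eq_of_ncard_support_le {α : Type*} [Fintype α] {δ : α → ℝ} {k m : ℕ}
    (hδ : (support δ).ncard ≤ k * m) :
    ∃ v : ℕ → α → ℝ, ∑ i ∈ range k, v i = δ ∧ (∀ i, (support (v i)).ncard ≤ m) ∧
      ∑ i ∈ range k, v i ⬝ᵥ v i = δ ⬝ᵥ δ := by
  classical
  have hsupp : ((univ.filter (δ · ≠ 0) : Finset α) : Set α) = support δ := by ext; simp
  obtain ⟨f, hf_lt, hf_card⟩ := exists_card_fiber_le (k := k) (m := m) (univ.filter (δ · ≠ 0))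
    (by rwa [← Set.ncard_coe_finset, hsupp])
  have hsum : ∀ x, ∀ g : ℝ → ℝ, g 0 = 0 →
      ∑ i ∈ range k, (if f x = i then g (δ x) else 0) = g (δ x) := by
    intro x g hg
    rw [sum_ite_eq]
    by_cases hx : δ x = 0
    · simp [hx, hg]
    · simp [hf_lt x (by simpa using hx)]
  refine ⟨fun i x => if f x = i then δ x else 0, ?_, fun i => ?_, ?_⟩
  · ext x
    simpa [Finset.sum_apply] using hsum x id rfl
  · calc (support _).ncard
        ≤ (({x ∈ univ.filter (δ · ≠ 0) | f x = i} : Finset α) : Set α).ncard :=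
          Set.ncard_le_ncard (fun x hx => ?_) (Set.toFinite _)
      _ ≤ m := by rw [Set.ncard_coe_finset]; exact hf_card i
    obtain ⟨hfx, hδx⟩ : f x = i ∧ δ x ≠ 0 := by simpa using hx
    simp [hfx, hδx]
  · simp only [dotProduct]
    rw [sum_comm]
    refine sum_congr rfl fun x _ => ?_
    rw [← hsum x (fun a => a * a) (zero_mul 0)]
    refine sum_congr rfl fun i _ => ?_
    split_ifs <;> simp

section SparseEig

variable {p : ℕ} {Q : Matrix (Fin p) (Fin p) ℝ}

theorem bddAbove_sparseEigSq_set (Q : Matrix (Fin p) (Fin p) ℝ) (m : ℕ) :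
    BddAbove {r : ℝ | ∃ δ : Fin p → ℝ,
      (support δ).ncard ≤ m ∧ δ ⬝ᵥ δ = 1 ∧ r = δ ⬝ᵥ Q *ᵥ δ} := by
  refine ⟨∑ i, ∑ j, |Q i j|, ?_⟩
  rintro _ ⟨δ, -, hδ, rfl⟩
  have hδ_le : ∀ i, |δ i| ≤ 1 := fun i => abs_le_one_iff_mul_self_le_one.2 <|
    hδ ▸ single_le_sum (fun j _ => mul_self_nonneg (δ j)) (mem_univ i)
  calc δ ⬝ᵥ Q *ᵥ δ = ∑ i, ∑ j, δ i * Q i j * δ j := by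
        simp only [dotProduct, mulVec, mul_sum, mul_assoc]
    _ ≤ ∑ i, ∑ j, |Q i j| := by
        gcongr with i _ j _
        calc δ i * Q i j * δ j ≤ |δ i| * |Q i j| * |δ j| := by
              rw [← abs_mul, ← abs_mul]; exact le_abs_self _
          _ ≤ 1 * |Q i j| * 1 := by gcongr <;> exact hδ_le _
          _ = |Q i j| := by ring

theorem dotProduct_mulVec_le_sparseEigSq {m : ℕ} {δ : Fin p → ℝ}
    (hδ : (support δ).ncard ≤ m) (hδ_one : δ ⬝ᵥ δ = 1) :
    δ ⬝ᵥ Q *ᵥ δ ≤ sparseEigSq Q m :=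
  le_csSup (bddAbove_sparseEigSq_set Q m) ⟨δ, hδ, hδ_one, rfl⟩

theorem dotProduct_mulVec_le_sparseEigSq_mul {m : ℕ} {v : Fin p → ℝ}
    (hv : (support v).ncard ≤ m) : v ⬝ᵥ Q *ᵥ v ≤ sparseEigSq Q m * (v ⬝ᵥ v) := by
  rcases eq_or_ne v 0 with rfl | hv0
  · simp
  set c := √(v ⬝ᵥ v)
  have hc : 0 < c := Real.sqrt_pos.2 <| (dotProduct_star_self_nonneg v).lt_of_ne' <| by
    simpa using hv0
  have hvv : v ⬝ᵥ v = c ^ 2 :=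
    (Real.sq_sqrt (by simpa using dotProduct_star_self_nonneg v)).symm
  have h := dotProduct_mulVec_le_sparseEigSq (Q := Q) (m := m) (δ := c⁻¹ • v)
    (by rwa [support_const_smul_of_ne_zero _ _ (inv_ne_zero hc.ne')])
    (by rw [smul_dotProduct, dotProduct_smul, hvv, smul_eq_mul, smul_eq_mul]; field_simp)
  rw [mulVec_smul, smul_dotProduct, dotProduct_smul, smul_eq_mul, smul_eq_mul] at h
  rw [hvv, ← div_le_iff₀ (by positivity)]
  exact le_of_eq_of_le (by ring) h

theorem sparseEigSq_nonneg (hQ : Q.PosSemidef) (m : ℕ) : 0 ≤ sparseEigSq Q m :=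
  Real.sSup_nonneg fun _ ⟨δ, _, _, hr⟩ => hr ▸ by simpa using hQ.dotProduct_mulVec_nonneg δ

theorem sparseEigSq_mul_le (hQ : Q.PosSemidef) (k m : ℕ) :
    sparseEigSq Q (k * m) ≤ k * sparseEigSq Q m := by
  refine Real.sSup_le ?_ (mul_nonneg k.cast_nonneg (sparseEigSq_nonneg hQ m))
  rintro _ ⟨δ, hδ, hδ_one, rfl⟩
  obtain ⟨v, rfl, hv, hvv⟩ := exists_sum_eq_of_ncard_support_le hδ
  calc (∑ i ∈ range k, v i) ⬝ᵥ Q *ᵥ ∑ i ∈ range k, v i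
      ≤ #(range k) * ∑ i ∈ range k, v i ⬝ᵥ Q *ᵥ v i := hQ.sum_dotProduct_mulVec_sum_le _ _
    _ ≤ k * ∑ i ∈ range k, sparseEigSq Q m * (v i ⬝ᵥ v i) := by
      rw [card_range]
      gcongr with i
      exact dotProduct_mulVec_le_sparseEigSq_mul (hv i)
    _ = k * sparseEigSq Q m := by rw [← mul_sum, hvv, hδ_one, mul_one]

end SparseEig

theorem sparseEigSq_sublinear_general (p : ℕ) (Q : Matrix (Fin p) (Fin p) ℝ)
    (hQ : Q.PosSemidef) (k m : ℕ) :
    sparseEigSq Q (k * m) ≤ (⌈(k : ℝ)⌉ : ℝ) * sparseEigSq Q m ∧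
      (⌈(k : ℝ)⌉ : ℝ) * sparseEigSq Q m ≤ 2 * k * sparseEigSq Q m := by
  rw [Int.ceil_natCast, Int.cast_natCast]
  have := sparseEigSq_nonneg hQ m
  exact ⟨sparseEigSq_mul_le hQ k m, by nlinarith⟩

/-- Sublinearity of maximal sparse eigenvalues (Belloni–Chernozhukov): for positive
integers `k, m`, `φ̄(km)² ≤ ⌈k⌉ φ̄(m)² ≤ 2k φ̄(m)²`. -/
theorem sparseEigSq_sublinear (p : ℕ) (Q : Matrix (Fin p) (Fin p) ℝ)
    (hQ : Q.PosSemidef) (k m : ℕ) (hk : 0 < k) (hm : 0 < m) :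
    sparseEigSq Q (k * m) ≤ (⌈(k : ℝ)⌉ : ℝ) * sparseEigSq Q m ∧
      (⌈(k : ℝ)⌉ : ℝ) * sparseEigSq Q m ≤ 2 * k * sparseEigSq Q m :=
  sparseEigSq_sublinear_general p Q hQ k m
end
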